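/- For u, v ∈ H¹(𝕋) with additionally ∂ₓ²v ∈ L², and τ > 0, the quantity I(u,v,v) := |⟨u, v² − e^{τ∂ₓ³}(e^{−τ∂ₓ³}v)²⟩_{L²}| satisfies I(u,v,v) ≤ c·τ·‖∂ₓv‖_{L²}²·‖∂ₓ²u‖_{L²} provided u ∈ H², for a constant c independent of τ. -/

import Mathlib

/-- The Airy group `e^{t∂ₓ³}` acting on Fourier coefficients by `f̂ₖ ↦ e^{-itk³} f̂ₖ`. -/
noncomputable def airy (t : ℝ) (f : ℤ → ℂ) : ℤ → ℂ :=
  fun k => Complex.exp (-Complex.I * (t : ℂ) * (k : ℂ) ^ 3) * f k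

/-- Fourier coefficients of the pointwise product: convolution of coefficients. -/
noncomputable def fconv (f g : ℤ → ℂ) : ℤ → ℂ := fun k => ∑' j : ℤ, f j * g (k - j)

/-- The derivative `∂ₓ` as the Fourier multiplier `ik`. -/
def dx (f : ℤ → ℂ) : ℤ → ℂ := fun k => Complex.I * (k : ℂ) * f k

/-- The real `L²(𝕋)` pairing `⟨f,g⟩ = ∫ fg`, in terms of Fourier coefficients. -/
noncomputable def pairing (f g : ℤ → ℂ) : ℂ := ∑' k : ℤ, f k * g (-k)

/-- The `L²(𝕋)` norm in terms of Fourier coefficients. -/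
noncomputable def l2norm (f : ℤ → ℂ) : ℝ := Real.sqrt (∑' k : ℤ, ‖f k‖ ^ 2)

/-- Membership in the Sobolev space `Hʳ(𝕋)`, in terms of Fourier coefficients. -/
def memH (r : ℝ) (f : ℤ → ℂ) : Prop :=
  Summable (fun k : ℤ => (1 + (k : ℝ) ^ 2) ^ r * ‖f k‖ ^ 2)

/-! The `k`-th Fourier coefficient of `v² - e^{τ∂ₓ³}(e^{-τ∂ₓ³}v)²` is
`∑ⱼ (1 - e^{-3iτjk(k-j)}) v̂ⱼ v̂ₖ₋ⱼ`, and `|1 - e^{iθ}| ≤ |θ|` bounds each factor by `3τ|k||j||k-j|`.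
Cauchy–Schwarz in `j` then bounds the coefficient by `3τ|k|‖∂ₓv‖²`, and pairing against `u`
costs `∑ₖ |k||ûₖ| ≤ (∑_{k≠0} k⁻²)^{1/2} ‖∂ₓ²u‖`, by Cauchy–Schwarz once more. -/

open Complex

theorem summable_and_tsum_mul_le_sqrt_mul_sqrt {ι : Type*} {f g : ι → ℝ} (hf : ∀ i, 0 ≤ f i)
    (hg : ∀ i, 0 ≤ g i) (hf₂ : Summable fun i => f i ^ 2) (hg₂ : Summable fun i => g i ^ 2) :
    (Summable fun i => f i * g i) ∧ ∑' i, f i * g i ≤ √(∑' i, f i ^ 2) * √(∑' i, g i ^ 2) := by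
  simpa [Real.sqrt_eq_rpow] using Real.summable_and_inner_le_Lp_mul_Lq_tsum_of_nonneg
    Real.HolderConjugate.two_two hf hg (by simpa using hf₂) (by simpa using hg₂)

theorem summable_and_tsum_norm_mul_norm_sub_le {F G : ℤ → ℂ} (hF : Summable fun k => ‖F k‖ ^ 2)
    (hG : Summable fun k => ‖G k‖ ^ 2) (k : ℤ) :
    (Summable fun j => ‖F j‖ * ‖G (k - j)‖) ∧
      ∑' j, ‖F j‖ * ‖G (k - j)‖ ≤ l2norm F * l2norm G := by
  have hG' : Summable fun j => ‖G (k - j)‖ ^ 2 :=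
    (Equiv.subLeft k).summable_iff.2 hG
  have hshift : ∑' j, ‖G (k - j)‖ ^ 2 = ∑' j, ‖G j‖ ^ 2 :=
    (Equiv.subLeft k).tsum_eq fun j => ‖G j‖ ^ 2
  simpa only [l2norm, hshift] using summable_and_tsum_mul_le_sqrt_mul_sqrt
    (fun _ => norm_nonneg _) (fun _ => norm_nonneg _) hF hG'

theorem norm_dx (f : ℤ → ℂ) (k : ℤ) : ‖dx f k‖ = |(k : ℝ)| * ‖f k‖ := by
  rw [dx, norm_mul, norm_mul, norm_I, norm_intCast, one_mul]

theorem norm_iterate_dx (n : ℕ) (f : ℤ → ℂ) (k : ℤ) : ‖dx^[n] f k‖ = |(k : ℝ)| ^ n * ‖f k‖ := by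
  induction n with
  | zero => simp
  | succ n ih =>
    rw [Function.iterate_succ_apply', norm_dx, ih]
    ring

theorem memH.mono {r s : ℝ} {f : ℤ → ℂ} (h : memH s f) (hrs : r ≤ s) : memH r f :=
  h.of_nonneg_of_le (fun _ => by positivity) fun k =>
    mul_le_mul_of_nonneg_right
      (Real.rpow_le_rpow_of_exponent_le (by nlinarith [sq_nonneg (k : ℝ)]) hrs) (sq_nonneg _)

theorem memH.summable_sq_norm_iterate_dx {r : ℝ} {n : ℕ} {f : ℤ → ℂ} (h : memH r f)
    (hn : n ≤ r) : Summable fun k => ‖dx^[n] f k‖ ^ 2 :=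
  (h.mono hn).of_nonneg_of_le (fun _ => sq_nonneg _) fun k => by
    rw [norm_iterate_dx, mul_pow, Real.rpow_natCast, ← pow_mul, mul_comm n, pow_mul, sq_abs]
    exact mul_le_mul_of_nonneg_right
      (pow_le_pow_left₀ (sq_nonneg _) (by linarith) n) (sq_nonneg _)

theorem airy_fconv_airy_neg (τ : ℝ) (f g : ℤ → ℂ) (k : ℤ) :
    airy τ (fconv (airy (-τ) f) (airy (-τ) g)) k =
      ∑' j : ℤ, exp (I * ((-3 * τ * j * k * (k - j) : ℝ) : ℂ)) * (f j * g (k - j)) := by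
  simp only [airy, fconv, ← tsum_mul_left]
  refine tsum_congr fun j => ?_
  -- `k³ - j³ - (k - j)³ = 3jk(k - j)`
  have hphase : I * ((-3 * τ * j * k * (k - j) : ℝ) : ℂ) =
      -I * τ * k ^ 3 + -I * ↑(-τ) * j ^ 3 + -I * ↑(-τ) * ↑(k - j) ^ 3 := by
    push_cast
    ring
  rw [hphase, exp_add, exp_add]
  ring

theorem norm_one_sub_exp_resonance_le (τ : ℝ) (j k : ℤ) :
    ‖1 - exp (I * ((-3 * τ * j * k * (k - j) : ℝ) : ℂ))‖ ≤
      3 * |τ| * |(k : ℝ)| * (|(j : ℝ)| * |((k - j : ℤ) : ℝ)|) := by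
  rw [norm_sub_rev]
  refine Real.norm_exp_I_mul_ofReal_sub_one_le.trans_eq ?_
  simp only [Real.norm_eq_abs, abs_mul, abs_neg, Int.cast_sub]
  norm_num
  ring

theorem norm_fconv_sub_airy_le (τ : ℝ) {f g : ℤ → ℂ} (hf : memH 1 f) (hg : memH 1 g) (k : ℤ) :
    ‖fconv f g k - airy τ (fconv (airy (-τ) f) (airy (-τ) g)) k‖ ≤
      3 * |τ| * l2norm (dx f) * l2norm (dx g) * |(k : ℝ)| := by
  have hL2 {F : ℤ → ℂ} (hF : memH 1 F) : Summable fun k => ‖F k‖ ^ 2 :=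
    hF.summable_sq_norm_iterate_dx (n := 0) (by norm_num)
  have hH1 {F : ℤ → ℂ} (hF : memH 1 F) : Summable fun k => ‖dx F k‖ ^ 2 :=
    hF.summable_sq_norm_iterate_dx (n := 1) (by norm_num)
  set θ : ℤ → ℂ := fun j => exp (I * ((-3 * τ * j * k * (k - j) : ℝ) : ℂ))
  obtain ⟨hfg, -⟩ := summable_and_tsum_norm_mul_norm_sub_le (hL2 hf) (hL2 hg) k
  obtain ⟨hdfg, hCS⟩ := summable_and_tsum_norm_mul_norm_sub_le (hH1 hf) (hH1 hg) k
  have hprod : Summable fun j => f j * g (k - j) := hfg.of_norm_bounded fun j => (norm_mul _ _).le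
  have htwisted : Summable fun j => θ j * (f j * g (k - j)) :=
    hfg.of_norm_bounded fun j => le_of_eq <| by
      simp only [θ, norm_mul, norm_exp_I_mul_ofReal, one_mul]
  have hterm (j : ℤ) : ‖(1 - θ j) * (f j * g (k - j))‖ ≤
      3 * |τ| * |(k : ℝ)| * (‖dx f j‖ * ‖dx g (k - j)‖) := by
    rw [norm_mul, norm_mul, norm_dx, norm_dx]
    calc _ ≤ 3 * |τ| * |(k : ℝ)| * (|(j : ℝ)| * |((k - j : ℤ) : ℝ)|) * (‖f j‖ * ‖g (k - j)‖) :=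
          mul_le_mul_of_nonneg_right (norm_one_sub_exp_resonance_le τ j k) (by positivity)
      _ = _ := by ring
  rw [airy_fconv_airy_neg, fconv, ← hprod.tsum_sub htwisted]
  calc ‖∑' j, (f j * g (k - j) - θ j * (f j * g (k - j)))‖
      = ‖∑' j, (1 - θ j) * (f j * g (k - j))‖ := by simp only [sub_mul, one_mul]
    _ ≤ 3 * |τ| * |(k : ℝ)| * ∑' j, ‖dx f j‖ * ‖dx g (k - j)‖ :=
      tsum_of_norm_bounded (hdfg.hasSum.mul_left _) hterm
    _ ≤ 3 * |τ| * |(k : ℝ)| * (l2norm (dx f) * l2norm (dx g)) := by gcongr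
    _ = _ := by ring

theorem norm_pairing_le {u g : ℤ → ℂ} {C : ℝ} (hu : Summable fun k => ‖dx (dx u) k‖ ^ 2)
    (hg : ∀ k : ℤ, ‖g k‖ ≤ C * |(k : ℝ)|) :
    ‖pairing u g‖ ≤ C * √(∑' k : ℤ, 1 / (k : ℝ) ^ 2) * l2norm (dx (dx u)) := by
  have hC : 0 ≤ C := by simpa using (norm_nonneg _).trans (hg 1)
  have hinv : Summable fun k : ℤ => (1 / |(k : ℝ)|) ^ 2 := by
    simpa [div_pow, sq_abs] using Real.summable_one_div_int_pow.2 one_lt_two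
  obtain ⟨hsum, hCS⟩ := summable_and_tsum_mul_le_sqrt_mul_sqrt (fun k => by positivity)
    (fun k => norm_nonneg _) hinv hu
  have hterm (k : ℤ) : ‖u k * g (-k)‖ ≤ C * (1 / |(k : ℝ)| * ‖dx (dx u) k‖) := by
    calc ‖u k * g (-k)‖ ≤ ‖u k‖ * (C * |(k : ℝ)|) := by
          rw [norm_mul]
          gcongr
          simpa using hg (-k)
      _ = C * (1 / |(k : ℝ)| * ‖dx (dx u) k‖) := by
          rw [norm_dx, norm_dx]
          -- also at `k = 0`, where `1 / |k| = 0`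
          rcases eq_or_ne k 0 with rfl | hk
          · simp
          · field_simp
  simp only [div_pow, sq_abs, one_pow] at hCS
  calc ‖pairing u g‖ ≤ C * ∑' k : ℤ, 1 / |(k : ℝ)| * ‖dx (dx u) k‖ :=
        tsum_of_norm_bounded (hsum.hasSum.mul_left C) hterm
    _ ≤ C * (√(∑' k : ℤ, 1 / (k : ℝ) ^ 2) * l2norm (dx (dx u))) := by gcongr; exact hCS
    _ = _ := (mul_assoc _ _ _).symm

/-- `I(u,v,v) = |⟨u, v² − e^{τ∂ₓ³}(e^{−τ∂ₓ³}v)²⟩| ≤ c τ ‖∂ₓv‖² ‖∂ₓ²u‖` for `u ∈ H²`,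
`v ∈ H¹` with `∂ₓ²v ∈ L²`. -/
theorem airy_commutator_Iuvv :
    ∃ c : ℝ, 0 < c ∧ ∀ (τ : ℝ), 0 < τ → ∀ u v : ℤ → ℂ,
      memH 1 u → memH 2 u → memH 1 v → Summable (fun k => ‖dx (dx v) k‖ ^ 2) →
      ‖pairing u
          (fun k => fconv v v k - airy τ (fconv (airy (-τ) v) (airy (-τ) v)) k)‖ ≤
        c * τ * l2norm (dx v) ^ 2 * l2norm (dx (dx u)) := by
  set S := ∑' k : ℤ, 1 / (k : ℝ) ^ 2
  have hS : 0 < S := (Real.summable_one_div_int_pow.2 one_lt_two).tsum_pos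
    (fun _ => by positivity) 1 (by norm_num)
  refine ⟨3 * √S, by positivity, fun τ hτ u v _ hu hv _ => ?_⟩
  have hu' : Summable fun k => ‖dx (dx u) k‖ ^ 2 :=
    hu.summable_sq_norm_iterate_dx (n := 2) (by norm_num)
  calc _ ≤ 3 * |τ| * l2norm (dx v) * l2norm (dx v) * √S * l2norm (dx (dx u)) :=
        norm_pairing_le hu' (norm_fconv_sub_airy_le τ hv hv)
    _ = _ := by rw [abs_of_pos hτ]; ring
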